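/- Generalized conditional mutual information characterizes conditional independence: Let S be a strictly proper scoring rule with induced generalized entropy H, and let ξ, η, ζ be jointly distributed random variables with ξ taking values in the measurable space Y. Define the generalized conditional mutual information I(ξ; η | ζ) = E_ζ[H(P_{ξ|ζ}) − E_{η|ζ}[H(P_{ξ|(η,ζ)})]]. Then I(ξ; η | ζ) ≥ 0, and I(ξ; η | ζ) = 0 if and only if ξ and η are conditionally independent given ζ, with P_ζ probability 1. -/

import Mathlib

/-!
Write `P ω` and `Q ω` for the conditional laws of `ξ` given `(η, ζ)` and given `ζ`, and `M ω` for
the conditional law of the sample point itself given `ζ`. By the tower property `Q ω` is the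
mixture of the `P ω'` over `ω' ∼ M ω`. For a strictly proper scoring rule the entropy of a mixture
dominates the average entropy of its components (bound each `H(P ω')` by the expected score
`∫ S(Q ω) dP ω'`, whose average is `H(Q ω)`), with equality exactly when almost every component is
the mixture itself. Integrating over `ω` gives `I(ξ; η | ζ) ≥ 0`, with equality iff `P = Q`
almost surely, which is the conditional independence of `ξ` and `η` given `ζ`.
-/

open MeasureTheory ProbabilityTheory

noncomputable section

/-- Generalized entropy induced by a scoring rule `S`: `H(q) = ∫ S(q,y) dq(y)`. -/
def gEntropy {𝒴 : Type*} [MeasurableSpace 𝒴] (S : Measure 𝒴 → 𝒴 → ℝ) (q : Measure 𝒴) : ℝ :=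
  ∫ y, S q y ∂q

/-- A (negatively oriented) scoring rule is proper if the expected score is minimized by the
true distribution. -/
def IsProper {𝒴 : Type*} [MeasurableSpace 𝒴] (S : Measure 𝒴 → 𝒴 → ℝ) : Prop :=
  ∀ p q : Measure 𝒴, IsProbabilityMeasure p → IsProbabilityMeasure q →
    ∫ y, S p y ∂p ≤ ∫ y, S q y ∂p

/-- A scoring rule is strictly proper if it is proper and the minimum is uniquely attained at
the true distribution. -/
def IsStrictlyProper {𝒴 : Type*} [MeasurableSpace 𝒴] (S : Measure 𝒴 → 𝒴 → ℝ) : Prop :=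
  IsProper S ∧ ∀ p q : Measure 𝒴, IsProbabilityMeasure p → IsProbabilityMeasure q →
    q ≠ p → ∫ y, S p y ∂p < ∫ y, S q y ∂p

/-- Generalized conditional mutual information
`I(ξ; η | ζ) = E[H(P_{ξ|ζ}) − H(P_{ξ|(η,ζ)})]` induced by the generalized entropy of `S`. -/
def gCondMutualInfo {Ω 𝒴 𝒲 𝒵 : Type*} [MeasurableSpace Ω] [MeasurableSpace 𝒴]
    [StandardBorelSpace 𝒴] [Nonempty 𝒴] [MeasurableSpace 𝒲] [MeasurableSpace 𝒵]
    (S : Measure 𝒴 → 𝒴 → ℝ) (μ : Measure Ω) [IsFiniteMeasure μ]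
    (ξ : Ω → 𝒴) (η : Ω → 𝒲) (ζ : Ω → 𝒵) : ℝ :=
  ∫ ω, (gEntropy S (condDistrib ξ ζ μ (ζ ω))
      - gEntropy S (condDistrib ξ (fun ω' => (η ω', ζ ω')) μ (η ω, ζ ω))) ∂μ

open Filter Set
open scoped ENNReal

namespace IsStrictlyProper

variable {𝒴 : Type*} [MeasurableSpace 𝒴] {S : Measure 𝒴 → 𝒴 → ℝ}

/- When `S q` is not `q`-integrable, `gEntropy S q` is the junk value `0`. Testing strict propriety
against the mixture `(p + q) / 2`, under which `S q` is not integrable either, still gives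
`gEntropy S p < 0`. -/
lemma gEntropy_neg_of_not_integrable (hS : IsStrictlyProper S) {p q : Measure 𝒴}
    [IsProbabilityMeasure p] [IsProbabilityMeasure q] (hpq : p ≠ q)
    (hq : ¬ Integrable (S q) q) : gEntropy S p < 0 := by
  obtain ⟨r, hr⟩ : ∃ r : Measure 𝒴, r = (2⁻¹ : ℝ≥0∞) • (p + q) := ⟨_, rfl⟩
  have hr_prob : IsProbabilityMeasure r := ⟨by simp [hr, ENNReal.inv_two_add_inv_two]⟩
  have hrq : r ≠ q := by
    rintro rfl
    have h_two : p + r = r + r := calc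
      p + r = (2 : ℝ≥0∞) • ((2⁻¹ : ℝ≥0∞) • (p + r)) := by
        rw [smul_smul, ENNReal.mul_inv_cancel two_ne_zero ENNReal.ofNat_ne_top, one_smul]
      _ = r + r := by rw [← hr, two_smul]
    refine hpq (Measure.ext fun s _ => ?_)
    have := congrArg (· s) h_two
    simp only [Measure.coe_add, Pi.add_apply] at this
    exact (ENNReal.add_left_inj (measure_ne_top r s)).mp this
  have h_int_r {f : 𝒴 → ℝ} : Integrable f r ↔ Integrable f p ∧ Integrable f q := by
    rw [hr, integrable_smul_measure (by simp) (by simp), integrable_add_measure]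
  have hHr : gEntropy S r < 0 := by
    have := hS.2 r q hr_prob inferInstance hrq.symm
    rwa [integral_undef fun h => hq (h_int_r.mp h).2] at this
  have hSr : Integrable (S r) r := by
    by_contra h
    exact hHr.ne (integral_undef h)
  have h_split : gEntropy S r = 2⁻¹ * (∫ y, S r y ∂p + ∫ y, S r y ∂q) := by
    have : gEntropy S r = ∫ y, S r y ∂((2⁻¹ : ℝ≥0∞) • (p + q)) := by rw [← hr]; rfl
    rw [this, integral_smul_measure, integral_add_measure (h_int_r.mp hSr).1 (h_int_r.mp hSr).2]
    simp
  have hp : gEntropy S p ≤ ∫ y, S r y ∂p := hS.1 p r inferInstance hr_prob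
  have hq' : 0 ≤ ∫ y, S r y ∂q := by
    simpa [gEntropy, integral_undef hq] using hS.1 q r inferInstance hr_prob
  linarith

/- The majorant is `a ↦ ∫ S (κ ∘ₘ m) ∂(κ a)` when `S (κ ∘ₘ m)` is integrable under the mixture,
and `0` otherwise. -/
lemma exists_integrable_majorant_gEntropy (hS : IsStrictlyProper S) {α : Type*}
    [MeasurableSpace α] (m : Measure α) [IsProbabilityMeasure m] (κ : Kernel α 𝒴)
    [IsMarkovKernel κ] :
    ∃ c : α → ℝ, Integrable c m ∧ ∫ a, c a ∂m = gEntropy S (κ ∘ₘ m) ∧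
      ∀ a, gEntropy S (κ a) ≤ c a ∧ (gEntropy S (κ a) = c a → κ a = κ ∘ₘ m) := by
  by_cases hq : Integrable (S (κ ∘ₘ m)) (κ ∘ₘ m)
  · have hq' := hq
    rw [Measure.comp_eq_comp_const_apply] at hq'
    refine ⟨fun a => ∫ y, S (κ ∘ₘ m) y ∂κ a, by simpa using hq'.integral_comp, ?_, fun a => ?_⟩
    · simpa [gEntropy, ← Measure.comp_eq_comp_const_apply] using (Kernel.integral_comp hq').symm
    refine ⟨hS.1 _ _ inferInstance inferInstance, fun h => ?_⟩
    by_contra hne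
    exact (hS.2 (κ a) (κ ∘ₘ m) inferInstance inferInstance (Ne.symm hne)).ne h
  · refine ⟨0, integrable_zero _ _ _, by simp [gEntropy, integral_undef hq], fun a => ?_⟩
    by_cases h : κ a = κ ∘ₘ m
    · simp [h, gEntropy, integral_undef hq]
    · have := hS.gEntropy_neg_of_not_integrable h hq
      exact ⟨this.le, fun h' => absurd h' this.ne⟩

theorem integral_gEntropy_le_gEntropy_comp (hS : IsStrictlyProper S) {α : Type*}
    [MeasurableSpace α] (m : Measure α) [IsProbabilityMeasure m] (κ : Kernel α 𝒴)
    [IsMarkovKernel κ] (hκ : Integrable (fun a => gEntropy S (κ a)) m) :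
    ∫ a, gEntropy S (κ a) ∂m ≤ gEntropy S (κ ∘ₘ m) ∧
      (∫ a, gEntropy S (κ a) ∂m = gEntropy S (κ ∘ₘ m) ↔ ∀ᵐ a ∂m, κ a = κ ∘ₘ m) := by
  obtain ⟨c, hc, hc_mean, hc_le⟩ := hS.exists_integrable_majorant_gEntropy m κ
  have hle : (fun a => gEntropy S (κ a)) ≤ᵐ[m] c := ae_of_all _ fun a => (hc_le a).1
  refine ⟨hc_mean ▸ integral_mono_ae hκ hc hle, fun h => ?_, fun h => ?_⟩
  · rw [← hc_mean, integral_eq_iff_of_ae_le hκ hc hle] at h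
    exact h.mono fun a ha => (hc_le a).2 ha
  · rw [integral_congr_ae (h.mono fun a ha => congrArg (gEntropy S) ha)]
    simp

end IsStrictlyProper

lemma MeasurableSpace.exists_countable_isPiSystem_generateFrom_eq (α : Type*)
    [m : MeasurableSpace α] [CountablyGenerated α] :
    ∃ C : Set (Set α), C.Countable ∧ IsPiSystem C ∧ generateFrom C = m := by
  classical
  have : Countable (countableGeneratingSet α) := countable_countableGeneratingSet.to_subtype
  refine ⟨range fun F : Finset (countableGeneratingSet α) => ⋂ s ∈ F, (s : Set α),
    countable_range _, ?_, le_antisymm ?_ ?_⟩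
  · rintro _ ⟨F₁, rfl⟩ _ ⟨F₂, rfl⟩ -
    exact ⟨F₁ ∪ F₂, Finset.set_biInter_inter _ _ _⟩
  · refine generateFrom_le ?_
    rintro _ ⟨F, rfl⟩
    exact .biInter F.countable_toSet fun s _ => measurableSet_countableGeneratingSet s.2
  · conv_lhs => rw [← generateFrom_countableGeneratingSet (α := α)]
    exact generateFrom_le fun s hs => measurableSet_generateFrom ⟨{⟨s, hs⟩}, by simp⟩

lemma ProbabilityTheory.Kernel.measurableSet_setOf_eq {α β : Type*} [MeasurableSpace α]
    [MeasurableSpace β] [MeasurableSpace.CountablyGenerated β] (κ η : Kernel α β)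
    [IsFiniteKernel κ] [IsFiniteKernel η] : MeasurableSet {a | κ a = η a} := by
  obtain ⟨C, hC, hC_pi, hC_gen⟩ := MeasurableSpace.exists_countable_isPiSystem_generateFrom_eq β
  have hC_meas : ∀ s ∈ C, MeasurableSet s :=
    fun s hs => hC_gen ▸ MeasurableSpace.measurableSet_generateFrom hs
  have h_eq : {a | κ a = η a} = {a | κ a univ = η a univ} ∩ ⋂ s ∈ C, {a | κ a s = η a s} := by
    ext a
    simp only [mem_ofPred_eq, mem_inter_iff, mem_iInter]
    exact ⟨fun h => by simp [h], fun h => ext_of_generate_finite C hC_gen.symm hC_pi h.2 h.1⟩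
  rw [h_eq]
  exact (measurableSet_eq_fun (κ.measurable_coe .univ) (η.measurable_coe .univ)).inter
    (.biInter hC fun s hs => measurableSet_eq_fun (κ.measurable_coe (hC_meas s hs))
      (η.measurable_coe (hC_meas s hs)))

namespace MeasureTheory

variable {Ω : Type*} {m m0 : MeasurableSpace Ω} {μ : Measure Ω}

lemma condExp_ae_eq_condExp_iff_forall_setIntegral_eq (hm : m ≤ m0) [SigmaFinite (μ.trim hm)]
    {f g : Ω → ℝ} (hf : Integrable f μ) (hg : Integrable g μ) :
    μ[f | m] =ᵐ[μ] μ[g | m] ↔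
      ∀ s, MeasurableSet[m] s → ∫ x in s, f x ∂μ = ∫ x in s, g x ∂μ := by
  refine ⟨fun h s hs => ?_, fun h => ?_⟩
  · rw [← setIntegral_condExp hm hf hs, ← setIntegral_condExp hm hg hs]
    exact setIntegral_congr_ae (hm s hs) (h.mono fun x hx _ => hx)
  · refine (ae_eq_condExp_of_forall_setIntegral_eq hm hf
      (fun s _ _ => integrable_condExp.integrableOn) (fun s hs _ => ?_)
      stronglyMeasurable_condExp.aestronglyMeasurable).symm
    rw [setIntegral_condExp hm hg hs, h s hs]

lemma condExp_inter_ae_eq_mul_iff [IsFiniteMeasure μ] (hm : m ≤ m0) {F T : Set Ω}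
    (hF : MeasurableSet F) (hT : MeasurableSet T) :
    (μ⟦F ∩ T | m⟧) =ᵐ[μ] (μ⟦F | m⟧) * (μ⟦T | m⟧) ↔
      ∀ A, MeasurableSet[m] A → μ.real (A ∩ T ∩ F) = ∫ ω in A ∩ T, (μ⟦F | m⟧) ω ∂μ := by
  have h_ind {E : Set Ω} (hE : MeasurableSet E) : Integrable (E.indicator fun _ => (1 : ℝ)) μ :=
    (integrable_const 1).indicator hE
  have h_mul : (μ⟦F | m⟧) * T.indicator (fun _ => 1) = T.indicator (μ⟦F | m⟧) := by
    ext ω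
    by_cases hω : ω ∈ T <;> simp [hω]
  have h_int : Integrable ((μ⟦F | m⟧) * T.indicator (fun _ => 1)) μ :=
    h_mul ▸ integrable_condExp.indicator hT
  have h_pull : μ[(μ⟦F | m⟧) * T.indicator (fun _ => 1) | m] =ᵐ[μ] (μ⟦F | m⟧) * (μ⟦T | m⟧) :=
    condExp_mul_of_stronglyMeasurable_left stronglyMeasurable_condExp h_int (h_ind hT)
  rw [← h_pull.congr_right,
    condExp_ae_eq_condExp_iff_forall_setIntegral_eq hm (h_ind (hF.inter hT)) h_int, h_mul]
  refine forall₂_congr fun A hA => ?_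
  rw [setIntegral_indicator (hF.inter hT), setIntegral_indicator hT, setIntegral_const,
    smul_eq_mul, mul_one, inter_comm F T, ← inter_assoc]

end MeasureTheory

namespace ProbabilityTheory

section CondDistribId

variable {Ω 𝒴 𝒵 : Type*} [MeasurableSpace Ω] [StandardBorelSpace Ω] [Nonempty Ω]
  [MeasurableSpace 𝒴] [MeasurableSpace 𝒵] {μ : Measure Ω} [IsFiniteMeasure μ] {ζ : Ω → 𝒵}

lemma ae_ae_condDistrib_id_iff (hζ : Measurable ζ) {p : Ω → Prop}
    (hp : MeasurableSet {ω | p ω}) :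
    (∀ᵐ ω ∂μ, ∀ᵐ ω' ∂condDistrib id ζ μ (ζ ω), p ω') ↔ ∀ᵐ ω ∂μ, p ω := by
  have hp_ae : MeasurableSet {z | ∀ᵐ ω' ∂condDistrib id ζ μ z, p ω'} := by
    simp_rw [ae_iff]
    exact Kernel.measurable_coe _ hp.compl (measurableSet_singleton 0)
  rw [← ae_map_iff hζ.aemeasurable hp_ae,
    ← Measure.ae_compProd_iff (p := fun x => p x.2) (measurable_snd hp),
    compProd_map_condDistrib aemeasurable_id,
    ae_map_iff (p := fun x : 𝒵 × Ω => p x.2) (hζ.aemeasurable.prodMk aemeasurable_id)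
      (measurable_snd hp)]
  rfl

lemma ae_ae_condDistrib_id_kernel_apply_eq [MeasurableSpace.CountablyGenerated 𝒴]
    (hζ : Measurable ζ) (κ : Kernel 𝒵 𝒴) [IsFiniteKernel κ] :
    ∀ᵐ ω ∂μ, ∀ᵐ ω' ∂condDistrib id ζ μ (ζ ω), κ (ζ ω') = κ (ζ ω) := by
  have h_meas : MeasurableSet {x : 𝒵 × Ω | κ (ζ x.2) = κ x.1} :=
    Kernel.measurableSet_setOf_eq (κ.comap (fun x : 𝒵 × Ω => ζ x.2) (hζ.comp measurable_snd))
      (κ.comap Prod.fst measurable_fst)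
  have h : ∀ᵐ x ∂(μ.map ζ ⊗ₘ condDistrib id ζ μ), κ (ζ x.2) = κ x.1 := by
    rw [compProd_map_condDistrib aemeasurable_id,
      ae_map_iff (hζ.aemeasurable.prodMk aemeasurable_id) h_meas]
    exact ae_of_all _ fun _ => rfl
  exact ae_of_ae_map hζ.aemeasurable (Measure.ae_ae_of_ae_compProd h)

lemma _root_.MeasureTheory.Integrable.ae_integrable_condDistrib_id (hζ : Measurable ζ)
    {f : Ω → ℝ} (hf : Integrable f μ) : ∀ᵐ ω ∂μ, Integrable f (condDistrib id ζ μ (ζ ω)) :=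
  (hf.comp_snd_map_prodMk ζ).condDistrib_ae hζ.aemeasurable aemeasurable_id

lemma _root_.MeasureTheory.Integrable.integral_condDistrib_id (hζ : Measurable ζ) {f : Ω → ℝ}
    (hf : Integrable f μ) : Integrable (fun ω => ∫ ω', f ω' ∂condDistrib id ζ μ (ζ ω)) μ :=
  integrable_condExp.congr (condExp_ae_eq_integral_condDistrib_id hζ hf)

lemma integral_integral_condDistrib_id (hζ : Measurable ζ) {f : Ω → ℝ} (hf : Integrable f μ) :
    ∫ ω, ∫ ω', f ω' ∂condDistrib id ζ μ (ζ ω) ∂μ = ∫ ω, f ω ∂μ := by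
  rw [← integral_congr_ae (condExp_ae_eq_integral_condDistrib_id hζ hf),
    integral_condExp hζ.comap_le]

lemma setLIntegral_lintegral_condDistrib_id (hζ : Measurable ζ) {f : Ω → ℝ≥0∞}
    (hf : Measurable f) {B : Set 𝒵} (hB : MeasurableSet B) :
    ∫⁻ z in B, ∫⁻ ω', f ω' ∂condDistrib id ζ μ z ∂μ.map ζ = ∫⁻ ω in ζ ⁻¹' B, f ω ∂μ := by
  have := Measure.setLIntegral_compProd (μ := μ.map ζ) (κ := condDistrib id ζ μ)
    (f := fun x => f x.2) (hf.comp measurable_snd) hB MeasurableSet.univ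
  rw [compProd_map_condDistrib aemeasurable_id,
    setLIntegral_map (f := fun x : 𝒵 × Ω => f x.2) (hB.prod .univ) (hf.comp measurable_snd)
      (hζ.prodMk measurable_id)] at this
  simpa [mk_preimage_prod] using this.symm

end CondDistribId

variable {Ω 𝒴 𝒲 𝒵 : Type*} [MeasurableSpace Ω] [MeasurableSpace 𝒴] [StandardBorelSpace 𝒴]
  [Nonempty 𝒴] [MeasurableSpace 𝒲] [MeasurableSpace 𝒵] {μ : Measure Ω} [IsFiniteMeasure μ]
  {ξ : Ω → 𝒴} {η : Ω → 𝒲} {ζ : Ω → 𝒵}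

lemma condDistrib_ae_eq_comp_condDistrib_id [StandardBorelSpace Ω] [Nonempty Ω] {𝒳 : Type*}
    [MeasurableSpace 𝒳] {X : Ω → 𝒳} (hξ : Measurable ξ) (hX : Measurable X)
    (hζ : Measurable ζ)
    (hζX : MeasurableSpace.comap ζ inferInstance ≤ MeasurableSpace.comap X inferInstance) :
    ∀ᵐ ω ∂μ, condDistrib ξ ζ μ (ζ ω)
      = (condDistrib ξ X μ).comap X hX ∘ₘ condDistrib id ζ μ (ζ ω) := by
  have h : condDistrib ξ ζ μ
      =ᵐ[μ.map ζ] (condDistrib ξ X μ).comap X hX ∘ₖ condDistrib id ζ μ := by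
    refine condDistrib_ae_eq_of_measure_eq_compProd ζ hξ.aemeasurable
      (Measure.ext_prod fun {B s} hB hs => ?_)
    rw [Measure.map_apply (hζ.prodMk hξ) (hB.prod hs), Measure.compProd_apply_prod hB hs]
    simp_rw [Kernel.comp_apply' _ _ _ hs, Kernel.comap_apply]
    rw [setLIntegral_lintegral_condDistrib_id (f := fun ω => condDistrib ξ X μ (X ω) s) hζ
        ((Kernel.measurable_coe _ hs).comp hX) hB,
      setLIntegral_condDistrib_of_measurableSet hX hξ.aemeasurable hs (hζX _ ⟨B, hB, rfl⟩),
      mk_preimage_prod]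
  filter_upwards [ae_of_ae_map hζ.aemeasurable h] with ω hω
  rw [hω, Kernel.comp_apply]

lemma ae_condDistrib_prod_eq_iff (hξ : Measurable ξ) (hη : Measurable η) (hζ : Measurable ζ) :
    (∀ᵐ ω ∂μ, condDistrib ξ (fun ω' => (η ω', ζ ω')) μ (η ω, ζ ω) = condDistrib ξ ζ μ (ζ ω)) ↔
      ∀ s t, MeasurableSet s → MeasurableSet t → ∀ B, MeasurableSet B →
        μ (ζ ⁻¹' B ∩ η ⁻¹' t ∩ ξ ⁻¹' s)
          = ∫⁻ ω in ζ ⁻¹' B ∩ η ⁻¹' t, condDistrib ξ ζ μ (ζ ω) s ∂μ := by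
  have hX : Measurable fun ω => (η ω, ζ ω) := hη.prodMk hζ
  have h_ae : (∀ᵐ ω ∂μ, condDistrib ξ (fun ω' => (η ω', ζ ω')) μ (η ω, ζ ω)
      = condDistrib ξ ζ μ (ζ ω)) ↔ condDistrib ξ (fun ω => (η ω, ζ ω)) μ
        =ᵐ[μ.map fun ω => (η ω, ζ ω)] (condDistrib ξ ζ μ).prodMkLeft 𝒲 := by
    rw [Filter.EventuallyEq, ae_map_iff hX.aemeasurable (Kernel.measurableSet_setOf_eq _ _)]
    rfl
  have h_rect {t : Set 𝒲} {B : Set 𝒵} {s : Set 𝒴} (ht : MeasurableSet t) (hB : MeasurableSet B)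
      (hs : MeasurableSet s) :
      (μ.map fun ω => ((η ω, ζ ω), ξ ω)) ((t ×ˢ B) ×ˢ s) = μ (ζ ⁻¹' B ∩ η ⁻¹' t ∩ ξ ⁻¹' s) ∧
      ((μ.map fun ω => (η ω, ζ ω)) ⊗ₘ (condDistrib ξ ζ μ).prodMkLeft 𝒲) ((t ×ˢ B) ×ˢ s)
        = ∫⁻ ω in ζ ⁻¹' B ∩ η ⁻¹' t, condDistrib ξ ζ μ (ζ ω) s ∂μ := by
    constructor
    · rw [Measure.map_apply (hX.prodMk hξ) ((ht.prod hB).prod hs)]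
      congr 1
      ext ω
      simp [and_comm]
    · rw [Measure.compProd_apply_prod (ht.prod hB) hs,
        setLIntegral_map (ht.prod hB) (Kernel.measurable_coe _ hs) hX, mk_preimage_prod,
        inter_comm]
      rfl
  rw [h_ae, condDistrib_ae_eq_iff_measure_eq_compProd _ hξ.aemeasurable, Measure.ext_prod₃_iff']
  refine ⟨fun h s t hs ht B hB => ?_, fun h t B s ht hB hs => ?_⟩
  · rw [← (h_rect ht hB hs).1, ← (h_rect ht hB hs).2]
    exact h ht hB hs
  · rw [(h_rect ht hB hs).1, (h_rect ht hB hs).2]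
    exact h s t hs ht B hB

lemma setIntegral_condExp_preimage_eq_toReal (hξ : Measurable ξ) (hζ : Measurable ζ)
    {s : Set 𝒴} (hs : MeasurableSet s) {A : Set Ω} (hA : MeasurableSet A) :
    ∫ ω in A, (μ⟦ξ ⁻¹' s | MeasurableSpace.comap ζ inferInstance⟧) ω ∂μ
      = (∫⁻ ω in A, condDistrib ξ ζ μ (ζ ω) s ∂μ).toReal := by
  rw [← integral_toReal (f := fun ω => condDistrib ξ ζ μ (ζ ω) s)
    ((Kernel.measurable_coe _ hs).comp hζ).aemeasurable
    (ae_of_all _ fun _ => measure_lt_top _ _)]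
  exact setIntegral_congr_ae hA ((condDistrib_ae_eq_condExp hζ hξ hs).mono fun ω h _ => h.symm)

/- Both sides say `μ (ζ ∈ B, η ∈ t, ξ ∈ s) = ∫_{ζ ∈ B, η ∈ t} P_{ξ|ζ}(s) dμ` for all measurable
`s`, `t`, `B`. Unlike `condIndepFun_iff_condDistrib_prod_ae_eq_prodMkRight`, no standard Borel
structure is needed on the codomain of `η`. -/
theorem condIndepFun_iff_ae_condDistrib_prod_eq [StandardBorelSpace Ω] (hξ : Measurable ξ)
    (hη : Measurable η) (hζ : Measurable ζ) :
    CondIndepFun (MeasurableSpace.comap ζ inferInstance) hζ.comap_le ξ η μ ↔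
      ∀ᵐ ω ∂μ, condDistrib ξ (fun ω' => (η ω', ζ ω')) μ (η ω, ζ ω) = condDistrib ξ ζ μ (ζ ω) := by
  rw [condIndepFun_iff_condExp_inter_preimage_eq_mul hξ hη, ae_condDistrib_prod_eq_iff hξ hη hζ]
  refine forall₄_congr fun s t hs ht => ?_
  have h_fin {A : Set Ω} : ∫⁻ ω in A, condDistrib ξ ζ μ (ζ ω) s ∂μ ≠ ⊤ :=
    ne_top_of_le_ne_top (by simp) (lintegral_mono fun _ => prob_le_one)
  have h_iff {B : Set 𝒵} (hB : MeasurableSet B) :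
      μ.real (ζ ⁻¹' B ∩ η ⁻¹' t ∩ ξ ⁻¹' s)
        = ∫ ω in ζ ⁻¹' B ∩ η ⁻¹' t, (μ⟦ξ ⁻¹' s | MeasurableSpace.comap ζ inferInstance⟧) ω ∂μ ↔
      μ (ζ ⁻¹' B ∩ η ⁻¹' t ∩ ξ ⁻¹' s)
        = ∫⁻ ω in ζ ⁻¹' B ∩ η ⁻¹' t, condDistrib ξ ζ μ (ζ ω) s ∂μ := by
    rw [setIntegral_condExp_preimage_eq_toReal hξ hζ hs ((hζ hB).inter (hη ht)), measureReal_def,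
      ENNReal.toReal_eq_toReal_iff' (measure_ne_top _ _) h_fin]
  refine (condExp_inter_ae_eq_mul_iff hζ.comap_le (hξ hs) (hη ht)).trans ⟨fun h B hB => ?_, ?_⟩
  · exact (h_iff hB).mp (h _ ⟨B, hB, rfl⟩)
  · rintro h _ ⟨B, hB, rfl⟩
    exact (h_iff hB).mpr (h B hB)

end ProbabilityTheory

theorem IsStrictlyProper.ae_integral_gEntropy_condDistrib_prod_le {Ω 𝒴 𝒲 𝒵 : Type*}
    [MeasurableSpace Ω] [StandardBorelSpace Ω] [Nonempty Ω] [MeasurableSpace 𝒴]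
    [StandardBorelSpace 𝒴] [Nonempty 𝒴] [MeasurableSpace 𝒲] [MeasurableSpace 𝒵]
    {μ : Measure Ω} [IsFiniteMeasure μ] {S : Measure 𝒴 → 𝒴 → ℝ} (hS : IsStrictlyProper S)
    {ξ : Ω → 𝒴} {η : Ω → 𝒲} {ζ : Ω → 𝒵} (hξ : Measurable ξ) (hη : Measurable η)
    (hζ : Measurable ζ) (hint : Integrable
      (fun ω => gEntropy S (condDistrib ξ (fun ω' => (η ω', ζ ω')) μ (η ω, ζ ω))) μ) :
    ∀ᵐ ω ∂μ,
      ∫ ω', gEntropy S (condDistrib ξ (fun ω' => (η ω', ζ ω')) μ (η ω', ζ ω'))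
          ∂condDistrib id ζ μ (ζ ω) ≤ gEntropy S (condDistrib ξ ζ μ (ζ ω)) ∧
        (∫ ω', gEntropy S (condDistrib ξ (fun ω' => (η ω', ζ ω')) μ (η ω', ζ ω'))
            ∂condDistrib id ζ μ (ζ ω) = gEntropy S (condDistrib ξ ζ μ (ζ ω)) ↔
          ∀ᵐ ω' ∂condDistrib id ζ μ (ζ ω),
            condDistrib ξ (fun ω' => (η ω', ζ ω')) μ (η ω', ζ ω') = condDistrib ξ ζ μ (ζ ω)) := by
  have hX : Measurable fun ω => (η ω, ζ ω) := hη.prodMk hζ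
  filter_upwards [condDistrib_ae_eq_comp_condDistrib_id hξ hX hζ
      (measurable_snd.comp (comap_measurable (fun ω => (η ω, ζ ω)))).comap_le,
    hint.ae_integrable_condDistrib_id hζ] with ω h_tower h_int
  rw [h_tower]
  exact hS.integral_gEntropy_le_gEntropy_comp _ ((condDistrib ξ _ μ).comap _ hX) h_int

theorem gCondMutualInfo_nonneg_and_eq_zero_iff_condIndepFun_general
    {Ω 𝒴 𝒲 𝒵 : Type*} [MeasurableSpace Ω] [StandardBorelSpace Ω] [Nonempty Ω]
    [MeasurableSpace 𝒲] [MeasurableSpace 𝒵]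
    [MeasurableSpace 𝒴] [StandardBorelSpace 𝒴] [Nonempty 𝒴]
    (μ : Measure Ω) [IsProbabilityMeasure μ]
    (S : Measure 𝒴 → 𝒴 → ℝ) (hS : IsStrictlyProper S)
    (ξ : Ω → 𝒴) (η : Ω → 𝒲) (ζ : Ω → 𝒵)
    (hξ : Measurable ξ) (hη : Measurable η) (hζ : Measurable ζ)
    -- all integrals appearing are assumed to be well defined and finite
    (hint_cond : Integrable (fun ω => gEntropy S (condDistrib ξ ζ μ (ζ ω))) μ)
    (hint_cond2 : Integrable
      (fun ω => gEntropy S (condDistrib ξ (fun ω' => (η ω', ζ ω')) μ (η ω, ζ ω))) μ) :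
    0 ≤ gCondMutualInfo S μ ξ η ζ
    ∧ (gCondMutualInfo S μ ξ η ζ = 0
        ↔ CondIndepFun (MeasurableSpace.comap ζ inferInstance) hζ.comap_le ξ η μ) := by
  set P := (condDistrib ξ (fun ω => (η ω, ζ ω)) μ).comap _ (hη.prodMk hζ)
  set Q := (condDistrib ξ ζ μ).comap ζ hζ
  set M := fun ω => condDistrib id ζ μ (ζ ω)
  have h_mixture := hS.ae_integral_gEntropy_condDistrib_prod_le hξ hη hζ hint_cond2
  have h_I : gCondMutualInfo S μ ξ η ζ
      = ∫ ω, (gEntropy S (Q ω) - ∫ ω', gEntropy S (P ω') ∂M ω) ∂μ := by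
    rw [gCondMutualInfo, integral_sub hint_cond hint_cond2,
      ← integral_integral_condDistrib_id hζ hint_cond2,
      ← integral_sub hint_cond (hint_cond2.integral_condDistrib_id hζ)]
    rfl
  have h_nonneg : 0 ≤ᵐ[μ] fun ω => gEntropy S (Q ω) - ∫ ω', gEntropy S (P ω') ∂M ω :=
    h_mixture.mono fun ω h => sub_nonneg.mpr h.1
  rw [h_I, integral_eq_zero_iff_of_nonneg_ae h_nonneg
      (hint_cond.sub (hint_cond2.integral_condDistrib_id hζ)),
    condIndepFun_iff_ae_condDistrib_prod_eq hξ hη hζ]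
  refine ⟨integral_nonneg_of_ae h_nonneg,
    (eventually_congr ?_).trans (ae_ae_condDistrib_id_iff hζ (Kernel.measurableSet_setOf_eq P Q))⟩
  filter_upwards [h_mixture, ae_ae_condDistrib_id_kernel_apply_eq hζ (condDistrib ξ ζ μ)]
    with ω h_mix h_const
  rw [Pi.zero_apply, sub_eq_zero, eq_comm]
  -- `Q` is constant on the fibres of `ζ`, so comparing `P ω'` with `Q ω` or with `Q ω'` agrees
  exact h_mix.2.trans (eventually_congr (h_const.mono fun ω' h => by rw [h]))

/-- **Generalized conditional mutual information characterizes conditional independence.**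
For a strictly proper scoring rule `S` and jointly distributed random variables `ξ` (with
values in a standard Borel space), `η`, `ζ`, one has `I(ξ; η | ζ) ≥ 0`, and
`I(ξ; η | ζ) = 0` if and only if `ξ` and `η` are conditionally independent given `ζ`
(with probability 1). -/
theorem gCondMutualInfo_nonneg_and_eq_zero_iff_condIndepFun
    {Ω 𝒴 𝒲 𝒵 : Type*} [MeasurableSpace Ω] [StandardBorelSpace Ω] [Nonempty Ω]
    [MeasurableSpace 𝒲] [MeasurableSpace 𝒵]
    [MeasurableSpace 𝒴] [StandardBorelSpace 𝒴] [Nonempty 𝒴]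
    (μ : Measure Ω) [IsProbabilityMeasure μ]
    (S : Measure 𝒴 → 𝒴 → ℝ) (hS : IsStrictlyProper S)
    (ξ : Ω → 𝒴) (η : Ω → 𝒲) (ζ : Ω → 𝒵)
    (hξ : Measurable ξ) (hη : Measurable η) (hζ : Measurable ζ)
    -- all integrals appearing are assumed to be well defined and finite
    (hint_cond : Integrable (fun ω => gEntropy S (condDistrib ξ ζ μ (ζ ω))) μ)
    (hint_cond2 : Integrable
      (fun ω => gEntropy S (condDistrib ξ (fun ω' => (η ω', ζ ω')) μ (η ω, ζ ω))) μ)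
    (hint_cross : Integrable
      (fun ω => ∫ y, S (condDistrib ξ ζ μ (ζ ω)) y
        ∂(condDistrib ξ (fun ω' => (η ω', ζ ω')) μ (η ω, ζ ω))) μ) :
    0 ≤ gCondMutualInfo S μ ξ η ζ
    ∧ (gCondMutualInfo S μ ξ η ζ = 0
        ↔ CondIndepFun (MeasurableSpace.comap ζ inferInstance) hζ.comap_le ξ η μ) :=
  gCondMutualInfo_nonneg_and_eq_zero_iff_condIndepFun_general μ S hS ξ η ζ hξ hη hζ hint_cond
    hint_cond2
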